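/- arXiv:1606.04170 — 6 statements merged into one kernel-verified Lean document; each statement's English description precedes it below -/
import Mathlib

section
/- Let t and f be natural numbers and let W be a nonempty family of f-element subsets of a t-element set which is a proper subfamily (W is not the family of all f-element subsets), and suppose that for every element i of the ground set there exists a member of W containing i and there exists a member of W not containing i. Then 1 < f < t−1. -/
/-- Lemma 1 of the paper: a successful discreet strategy requires 1 < f < t - 1. -/
theorem discreet_requires (t f : ℕ) (W : Finset (Finset (Fin t)))
    (hne : W.Nonempty)
    (hcard : ∀ A ∈ W, A.card = f)
    (hproper : W ≠ Finset.powersetCard f (Finset.univ : Finset (Fin t)))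
    (hdiscreet : ∀ i : Fin t, (∃ A ∈ W, i ∈ A) ∧ (∃ A ∈ W, i ∉ A)) :
    1 < f ∧ f < t - 1 := by
  obtain ⟨A0, hA0⟩ := hne
  have hsub : W ⊆ Finset.powersetCard f (Finset.univ : Finset (Fin t)) := by
    intro A hA
    rw [Finset.mem_powersetCard]
    exact ⟨Finset.subset_univ A, hcard A hA⟩
  have hft : f ≤ t := by
    have h1 := hcard A0 hA0
    have h2 := Finset.card_le_univ A0
    simp only [Finset.card_univ, Fintype.card_fin] at h2
    omega
  have hf0 : f ≠ 0 := by
    intro h; subst h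
    apply hproper
    apply Finset.Subset.antisymm hsub
    intro B hB
    rw [Finset.mem_powersetCard, Finset.card_eq_zero] at hB
    have h1 := hcard A0 hA0
    rw [Finset.card_eq_zero] at h1
    rw [hB.2, ← h1]; exact hA0
  have hf1 : f ≠ 1 := by
    intro h; subst h
    apply hproper
    apply Finset.Subset.antisymm hsub
    intro B hB
    rw [Finset.mem_powersetCard, Finset.card_eq_one] at hB
    obtain ⟨i, rfl⟩ := hB.2
    obtain ⟨A, hA, hiA⟩ := (hdiscreet i).1
    obtain ⟨j, rfl⟩ := Finset.card_eq_one.mp (hcard A hA)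
    rw [Finset.mem_singleton] at hiA
    subst hiA; exact hA
  have hftne : f ≠ t := by
    intro h
    have ht : 0 < t := by omega
    obtain ⟨A, hA, hiA⟩ := (hdiscreet ⟨0, ht⟩).2
    have : A = Finset.univ := Finset.eq_univ_of_card A (by simp [hcard A hA, h])
    subst this; exact hiA (Finset.mem_univ _)
  have hftm1 : f ≠ t - 1 := by
    intro h
    apply hproper
    apply Finset.Subset.antisymm hsub
    intro B hB
    rw [Finset.mem_powersetCard] at hB
    have hBc : (Bᶜ).card = 1 := by
      rw [Finset.card_compl, hB.2]
      simp only [Fintype.card_fin]; omega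
    obtain ⟨i, hi⟩ := Finset.card_eq_one.mp hBc
    obtain ⟨A, hA, hiA⟩ := (hdiscreet i).2
    have hBeq : B = ({i}ᶜ : Finset (Fin t)) := by rw [← hi, compl_compl]
    have hAsub : A ⊆ ({i}ᶜ : Finset (Fin t)) := by
      intro j hj
      simp only [Finset.mem_compl, Finset.mem_singleton]
      rintro rfl; exact hiA hj
    have hAcard : ({i}ᶜ : Finset (Fin t)).card ≤ A.card := by
      rw [Finset.card_compl, hcard A hA, Finset.card_singleton]
      simp only [Fintype.card_fin]; omega
    have hAeq : A = ({i}ᶜ : Finset (Fin t)) :=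
      Finset.eq_of_subset_of_card_le hAsub hAcard
    rw [hBeq, ← hAeq]; exact hA
  omega
end

section
/- Fix integers a ≥ 2 and b ≥ 1, and set f = a·b. Then the limit as n → ∞ (over natural numbers n) of the real sequence C(a·n, f) / C(n, b)^a equals (f^f / f!) · (b! / b^b)^a, equivalently a^{ab} · (b!)^a / (ab)!. -/
/-!
Since `C(m, k) ~ m^k / k!` as `m → ∞` for fixed `k`, the quotient `C(a n, a b) / C(n, b)^a` is
asymptotic to `(a n)^(a b) / (a b)! · (b! / n^b)^a`, in which the powers of `n` cancel.
-/

open Asymptotics Filter Topology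

theorem isEquivalent_choose_mul {a : ℕ} (ha : 0 < a) (k : ℕ) :
    (fun n : ℕ ↦ ((a * n).choose k : ℝ)) ~[atTop]
      fun n : ℕ ↦ ((a * n : ℝ) ^ k / k.factorial) := by
  have := (isEquivalent_choose k).comp_tendsto (tendsto_id.const_mul_atTop' ha)
  simpa [Function.comp_def] using this

theorem tendsto_choose_mul_div_choose_pow {a : ℕ} (ha : 0 < a) (b : ℕ) :
    Tendsto (fun n : ℕ ↦ ((a * n).choose (a * b) : ℝ) / (n.choose b : ℝ) ^ a) atTop
      (𝓝 ((a : ℝ) ^ (a * b) * (b.factorial : ℝ) ^ a / (a * b).factorial)) := by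
  have hequiv := (isEquivalent_choose_mul ha (a * b)).div ((isEquivalent_choose b).pow a)
  refine hequiv.symm.tendsto_nhds (tendsto_const_nhds.congr' ?_)
  filter_upwards [eventually_ne_atTop 0] with n hn0
  have hn : (n : ℝ) ≠ 0 := Nat.cast_ne_zero.mpr hn0
  have hb : (b.factorial : ℝ) ≠ 0 := Nat.cast_ne_zero.mpr b.factorial_ne_zero
  simp only [Pi.div_apply, Pi.pow_apply]
  rw [div_pow, mul_pow, ← pow_mul, mul_comm b a]
  field_simp

theorem mul_pow_self_div_factorial_mul_eq (a b : ℕ) :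
    ((a * b : ℕ) : ℝ) ^ (a * b) / (a * b).factorial * ((b.factorial : ℝ) / (b : ℝ) ^ b) ^ a
      = (a : ℝ) ^ (a * b) * (b.factorial : ℝ) ^ a / (a * b).factorial := by
  have hbb : (b : ℝ) ^ b ≠ 0 := by exact_mod_cast Nat.pow_self_pos.ne'
  push_cast
  rw [mul_pow, mul_comm a b, pow_mul (b : ℝ), div_pow]
  field_simp

theorem revealing_factor_limit_general (a b : ℕ) (ha : 2 ≤ a)
    (f : ℕ) (hf : f = a * b) :
    Filter.Tendsto
        (fun n : ℕ => ((a * n).choose f : ℝ) / ((n.choose b : ℝ)) ^ a)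
        Filter.atTop
        (nhds (((f : ℝ) ^ f / (Nat.factorial f : ℝ)) *
          ((Nat.factorial b : ℝ) / (b : ℝ) ^ b) ^ a))
    ∧ ((f : ℝ) ^ f / (Nat.factorial f : ℝ)) *
          ((Nat.factorial b : ℝ) / (b : ℝ) ^ b) ^ a
        = (a : ℝ) ^ (a * b) * (Nat.factorial b : ℝ) ^ a /
            (Nat.factorial (a * b) : ℝ) := by
  subst hf
  rw [mul_pow_self_div_factorial_mul_eq]
  exact ⟨tendsto_choose_mul_div_choose_pow (by omega) b, rfl⟩

/-- Equation (1) of the paper: the limiting revealing factor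
`X = C(t,f)/C(t/a, f/a)^a` as the number of coins tends to infinity through
multiples of `a`, where `f = a·b`. -/
theorem revealing_factor_limit (a b : ℕ) (ha : 2 ≤ a) (hb : 1 ≤ b)
    (f : ℕ) (hf : f = a * b) :
    Filter.Tendsto
        (fun n : ℕ => ((a * n).choose f : ℝ) / ((n.choose b : ℝ)) ^ a)
        Filter.atTop
        (nhds (((f : ℝ) ^ f / (Nat.factorial f : ℝ)) *
          ((Nat.factorial b : ℝ) / (b : ℝ) ^ b) ^ a))
    ∧ ((f : ℝ) ^ f / (Nat.factorial f : ℝ)) *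
          ((Nat.factorial b : ℝ) / (b : ℝ) ^ b) ^ a
        = (a : ℝ) ^ (a * b) * (Nat.factorial b : ℝ) ^ a /
            (Nat.factorial (a * b) : ℝ) :=
  revealing_factor_limit_general a b ha f hf
end

section
/- Fix an integer m ≥ 2. For n ∈ ℕ and x ∈ {0,1}^n, let z(x) be the number of coordinates of x equal to 0, let MOD*_m(x) = 1 if m divides z(x) and 0 otherwise, let x^i denote x with its i-th coordinate flipped, let σ_x = #{ i : 1 ≤ i ≤ n, MOD*_m(x^i) ≠ MOD*_m(x) }, and let α_n = 2^{−n} · Σ_{x ∈ {0,1}^n} σ_x be the average sensitivity. Then α_n − 2n/m tends to 0 as n → ∞. -/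
/-- The number of coordinates of `x` equal to `0` (i.e. `false`). -/
def zeros {n : ℕ} (x : Fin n → Bool) : ℕ :=
  (Finset.univ.filter fun i => x i = false).card

/-- The Boolean function `MOD*_m`: outputs `1` (`true`) iff the number of
`0`-coordinates of the input is a multiple of `m`. -/
def modStar (m : ℕ) {n : ℕ} (x : Fin n → Bool) : Bool :=
  decide (m ∣ zeros x)

/-- The sensitivity of `MOD*_m` at `x`: the number of coordinate flips that
change the output. -/
def sens (m : ℕ) {n : ℕ} (x : Fin n → Bool) : ℕ :=
  (Finset.univ.filter fun i =>
    modStar m (Function.update x i (!x i)) ≠ modStar m x).card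

/-!
Flipping a coordinate moves the number of zeros by one, so an edge of the cube between the levels
`k` and `k + 1` is sensitive exactly when `m ∣ k` or `m ∣ k + 1`. Counting each sensitive edge from
its endpoint with a `1` in the flipped coordinate gives
`∑ₓ σₓ = 2n ∑ {(n-1).choose k | m ∣ k ∨ m ∣ k + 1}`.
By the roots-of-unity filter, `m ∑ {N.choose k | m ∣ k + s} = ∑ⱼ ζ ^ (j s) (1 + ζ ^ j) ^ N` for a
primitive `m`-th root of unity `ζ`; the term `j = 0` is `2 ^ N` and the others are exponentially
smaller, since `|1 + ζ ^ j| < 2`. So each residue class carries `2 ^ N / m` up to an error that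
still vanishes after multiplication by `n / 2 ^ n`.
-/

open Finset Filter Topology

section Cube

variable {ι β : Type*} [Fintype ι] [DecidableEq ι] [DecidableEq β]

theorem card_update_not_ne_eq_two_mul (f : (ι → Bool) → β) (i : ι) :
    #{x | f (Function.update x i (!x i)) ≠ f x}
      = 2 * #{x | x i = true ∧ f (Function.update x i (!x i)) ≠ f x} := by
  set flip : (ι → Bool) → ι → Bool := fun x => Function.update x i (!x i)
  have flip_flip (x) : flip (flip x) = x := by simp [flip]
  have flip_apply (x) : flip x i = !x i := by simp [flip]
  have flip_ne_iff (x) : f (flip (flip x)) ≠ f (flip x) ↔ f (flip x) ≠ f x := by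
    rw [flip_flip, ne_comm]
  rw [← card_filter_add_card_filter_not (fun x => x i = true), filter_filter, filter_filter,
    two_mul]
  congr 1
  · simp only [and_comm]
  · refine card_nbij' flip flip ?_ ?_ (fun x _ => flip_flip x) (fun x _ => flip_flip x)
    · intro x hx
      simp only [coe_filter, mem_univ, true_and, Set.mem_ofPred_eq] at hx ⊢
      exact ⟨by simpa [flip_apply] using hx.2, (flip_ne_iff x).mpr hx.1⟩
    · intro x hx
      simp only [coe_filter, mem_univ, true_and, Set.mem_ofPred_eq] at hx ⊢
      exact ⟨(flip_ne_iff x).mpr hx.2, by simp [flip_apply, hx.1]⟩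

theorem sum_card_update_not_ne_eq_two_mul (f : (ι → Bool) → β) :
    ∑ x, #{i | f (Function.update x i (!x i)) ≠ f x}
      = 2 * ∑ x, #{i | x i = true ∧ f (Function.update x i (!x i)) ≠ f x} := by
  simp only [card_filter]
  rw [sum_comm]
  conv_rhs => rw [sum_comm, mul_sum]
  simp only [← card_filter, card_update_not_ne_eq_two_mul]

end Cube

section Zeros

variable {n : ℕ}

def zeroSet : (Fin n → Bool) ≃ Finset (Fin n) where
  toFun x := {i | x i = false}
  invFun s i := decide (i ∉ s)
  left_inv x := by ext i; cases h : x i <;> simp [h]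
  right_inv s := by ext i; simp

theorem card_zeroSet (x : Fin n → Bool) : #(zeroSet x) = zeros x := rfl

theorem sum_apply_zeros {M : Type*} [AddCommMonoid M] (F : ℕ → M) :
    ∑ x : Fin n → Bool, F (zeros x) = ∑ k ∈ range (n + 1), n.choose k • F k := by
  simpa [← card_zeroSet] using
    (zeroSet.sum_comp fun s => F #s).trans (sum_powerset_apply_card F (x := univ))

theorem card_filter_eq_true (x : Fin n → Bool) : #{i | x i = true} = n - zeros x := by
  have := card_filter_add_card_filter_not (s := univ) (fun i => x i = false)
  simp only [Bool.not_eq_false, card_univ, Fintype.card_fin] at this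
  rw [zeros]
  omega

theorem zeros_update_false {x : Fin n → Bool} {i : Fin n} (h : x i = true) :
    zeros (Function.update x i false) = zeros x + 1 := by
  rw [← card_zeroSet, ← card_zeroSet, ← card_insert_of_notMem (a := i) (by simp [zeroSet, h])]
  congr 1
  ext j
  rcases eq_or_ne j i with rfl | hj <;> simp [zeroSet, *]

end Zeros

theorem Nat.not_dvd_and_dvd_add_one {m : ℕ} (hm : m ≠ 1) (a : ℕ) : ¬(m ∣ a ∧ m ∣ a + 1) :=
  fun h => hm (Nat.dvd_one.mp ((Nat.dvd_add_right h.1).mp h.2))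

theorem modStar_update_not_ne_iff {m n : ℕ} (hm : m ≠ 1) {x : Fin n → Bool} {i : Fin n}
    (h : x i = true) :
    modStar m (Function.update x i (!x i)) ≠ modStar m x ↔ m ∣ zeros x ∨ m ∣ zeros x + 1 := by
  rw [h, Bool.not_true, modStar, modStar, zeros_update_false h, ne_eq, decide_eq_decide]
  have := Nat.not_dvd_and_dvd_add_one hm (zeros x)
  tauto

theorem sum_sens_eq_two_mul {m : ℕ} (hm : m ≠ 1) (n : ℕ) :
    ∑ x : Fin n → Bool, sens m x
      = 2 * ∑ x : Fin n → Bool, if m ∣ zeros x ∨ m ∣ zeros x + 1 then n - zeros x else 0 := by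
  simp only [sens]
  rw [sum_card_update_not_ne_eq_two_mul]
  congr 1
  refine sum_congr rfl fun x _ => ?_
  rw [filter_congr fun i _ => and_congr_right (modStar_update_not_ne_iff hm)]
  split_ifs with hP <;> simp [hP, card_filter_eq_true]

def dvdChooseSum (m s N : ℕ) : ℕ :=
  ∑ k ∈ range (N + 1), if m ∣ k + s then N.choose k else 0

theorem sum_sens_eq {m : ℕ} (hm : m ≠ 1) (N : ℕ) :
    ∑ x : Fin (N + 1) → Bool, sens m x
      = 2 * (N + 1) * (dvdChooseSum m 0 N + dvdChooseSum m 1 N) := by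
  rw [sum_sens_eq_two_mul hm, sum_apply_zeros (fun k => if m ∣ k ∨ m ∣ k + 1 then N + 1 - k else 0),
    sum_range_succ, Nat.sub_self, ite_self, smul_zero, add_zero, dvdChooseSum, dvdChooseSum,
    ← sum_add_distrib, mul_assoc]
  congr 1
  rw [mul_sum]
  refine sum_congr rfl fun k _ => ?_
  rw [smul_eq_mul, mul_ite, mul_zero, ← Nat.choose_mul_succ_eq]
  have := Nat.not_dvd_and_dvd_add_one hm k
  split_ifs <;> first | tauto | ring

namespace IsPrimitiveRoot

variable {R : Type*} [CommRing R] [IsDomain R] {ζ : R} {m : ℕ}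

theorem sum_pow_mul_eq_ite (hζ : IsPrimitiveRoot ζ m) (t : ℕ) :
    ∑ j ∈ range m, ζ ^ (j * t) = if m ∣ t then (m : R) else 0 := by
  simp_rw [pow_mul']
  split_ifs with h
  · simp [(hζ.pow_eq_one_iff_dvd t).mpr h]
  · have hne : ζ ^ t - 1 ≠ 0 := sub_ne_zero.mpr (mt (hζ.pow_eq_one_iff_dvd t).mp h)
    have hgeom := geom_sum_mul (ζ ^ t) m
    rw [← pow_mul, mul_comm t m, pow_mul, hζ.pow_eq_one, one_pow, sub_self] at hgeom
    exact (mul_eq_zero.mp hgeom).resolve_right hne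

theorem natCast_mul_dvdChooseSum (hζ : IsPrimitiveRoot ζ m) (s N : ℕ) :
    (m : R) * dvdChooseSum m s N = ∑ j ∈ range m, ζ ^ (j * s) * (1 + ζ ^ j) ^ N := by
  simp_rw [add_comm (1 : R), add_pow, one_pow, mul_one, mul_sum, ← mul_assoc, ← pow_mul,
    ← pow_add, ← mul_add]
  rw [sum_comm, dvdChooseSum, Nat.cast_sum, mul_sum]
  refine sum_congr rfl fun k _ => ?_
  rw [← sum_mul, add_comm s, hζ.sum_pow_mul_eq_ite]
  split_ifs <;> simp [mul_comm]

end IsPrimitiveRoot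

theorem tendsto_natCast_succ_mul_pow {K : Type*} [NormedField K] [CompleteSpace K] {r : K}
    (hr : ‖r‖ < 1) : Tendsto (fun N : ℕ => (N + 1 : K) * r ^ N) atTop (𝓝 0) :=
  ((summable_pow_mul_geometric_of_norm_lt_one 1 hr).add
    (summable_geometric_of_norm_lt_one hr)).tendsto_atTop_zero.congr fun N => by ring

theorem norm_one_add_div_two_lt_one {z : ℂ} (hz : ‖z‖ = 1) (h1 : z ≠ 1) :
    ‖(1 + z) / 2‖ < 1 := by
  have h := (norm_midpoint_lt_iff (x := (1 : ℂ)) (y := z) (by rw [hz, norm_one])).mpr h1.symm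
  rw [norm_one, Complex.real_smul] at h
  rwa [show (1 + z) / 2 = ((1 / 2 : ℝ) : ℂ) * (1 + z) by push_cast; ring]

theorem tendsto_succ_mul_dvdChooseSum_sub {m : ℕ} (hm : 0 < m) (s : ℕ) :
    Tendsto (fun N : ℕ => (N + 1 : ℝ) * (m * dvdChooseSum m s N / 2 ^ N - 1)) atTop (𝓝 0) := by
  set ζ : ℂ := Complex.exp (2 * Real.pi * Complex.I / m)
  have hζ : IsPrimitiveRoot ζ m := Complex.isPrimitiveRoot_exp m hm.ne'
  have hw (j : ℕ) (hj : j ∈ Ico 1 m) : ‖(1 + ζ ^ j) / 2‖ < 1 := by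
    rw [mem_Ico] at hj
    refine norm_one_add_div_two_lt_one ?_ fun h => ?_
    · rw [norm_pow, Complex.norm_eq_one_of_pow_eq_one hζ.pow_eq_one hm.ne', one_pow]
    · have := Nat.le_of_dvd hj.1 ((hζ.pow_eq_one_iff_dvd _).mp h)
      omega
  have hsum (N : ℕ) : (m : ℂ) * dvdChooseSum m s N / 2 ^ N - 1
      = ∑ j ∈ Ico 1 m, ζ ^ (j * s) * ((1 + ζ ^ j) / 2) ^ N := by
    rw [hζ.natCast_mul_dvdChooseSum, range_eq_Ico, sum_eq_sum_Ico_succ_bot hm, add_div]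
    simp only [zero_mul, pow_zero, one_mul, one_add_one_eq_two, zero_add, sum_div, mul_div_assoc,
      div_pow]
    rw [div_self (pow_ne_zero N two_ne_zero), add_sub_cancel_left]
  have hlim := tendsto_finsetSum (Ico 1 m) fun j hj =>
    (tendsto_natCast_succ_mul_pow (hw j hj)).const_mul (ζ ^ (j * s))
  simp only [mul_zero, sum_const_zero] at hlim
  rw [← tendsto_ofReal_iff, Complex.ofReal_zero]
  refine hlim.congr fun N => ?_
  push_cast
  rw [hsum, mul_sum]
  exact sum_congr rfl fun j _ => mul_left_comm _ _ _

/-- Theorem 7 of the paper: the Boolean function `MOD*_m` has average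
sensitivity `2n/m + o(1)`. -/
theorem average_sensitivity_modStar (m : ℕ) (hm : 2 ≤ m) :
    Filter.Tendsto
      (fun n : ℕ =>
        (∑ x : Fin n → Bool, (sens m x : ℝ)) / 2 ^ n - 2 * n / m)
      Filter.atTop (nhds 0) := by
  have hlim := ((tendsto_succ_mul_dvdChooseSum_sub (m := m) (by omega) 0).add
    (tendsto_succ_mul_dvdChooseSum_sub (m := m) (by omega) 1)).const_mul (m : ℝ)⁻¹
  rw [add_zero, mul_zero] at hlim
  rw [← tendsto_add_atTop_iff_nat 1]
  refine hlim.congr fun N => ?_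
  rw [← Nat.cast_sum, sum_sens_eq (by omega)]
  have : (m : ℝ) ≠ 0 := by positivity
  push_cast
  field_simp
  ring
end

section
/- Fix an integer m ≥ 2 and let n ∈ ℕ. For x ∈ {0,1}^n, let z(x) be the number of coordinates of x equal to 0, let MOD*_m(x) = 1 if m divides z(x) and 0 otherwise, let x^i denote x with its i-th coordinate flipped, and let σ_x = #{ i : 1 ≤ i ≤ n, MOD*_m(x^i) ≠ MOD*_m(x) }. Then Σ_{x ∈ {0,1}^n} σ_x = 2n · Σ_{s=0}^{⌊n/m⌋} C(n, s·m). -/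
/-!
Each sensitive edge `{x, flipAt x i}` of the hypercube has exactly one endpoint on which the
function is `true`, so the total sensitivity is twice the sensitivity summed over the `true`
inputs. Flipping a coordinate changes the number of zeros by one, so for `m ≠ 1` every input
with `m ∣ zeros x` is sensitive in all `n` coordinates, and there are `∑ₛ C(n, s m)` such inputs.
-/

open Finset Function

section Sensitivity

variable {ι : Type*} [DecidableEq ι]

def flipAt (x : ι → Bool) (i : ι) : ι → Bool :=
  update x i (!x i)

@[simp]
theorem flipAt_flipAt (x : ι → Bool) (i : ι) : flipAt (flipAt x i) i = x := by
  simp [flipAt]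

theorem flipAt_involutive (i : ι) : Involutive (flipAt · i) :=
  (flipAt_flipAt · i)

variable [Fintype ι]

def sensitivity (f : (ι → Bool) → Bool) (x : ι → Bool) : ℕ :=
  #{i | f (flipAt x i) ≠ f x}

theorem card_flipAt_ne_eq_two_mul (f : (ι → Bool) → Bool) (i : ι) :
    #{x | f (flipAt x i) ≠ f x} = 2 * #{x | f (flipAt x i) ≠ f x ∧ f x = true} := by
  have h_false_to_true :
      #{x | f (flipAt x i) ≠ f x ∧ ¬f x = true} = #{x | f (flipAt x i) ≠ f x ∧ f x = true} := by
    refine card_equiv (flipAt_involutive i).toPerm fun x => ?_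
    simp only [mem_filter, mem_univ, true_and, Involutive.coe_toPerm, flipAt_flipAt]
    cases f x <;> cases f (flipAt x i) <;> decide
  rw [← card_filter_add_card_filter_not (s := {x | f (flipAt x i) ≠ f x}) (f · = true),
    filter_filter, filter_filter, h_false_to_true, two_mul]

theorem sum_sensitivity_eq_two_mul (f : (ι → Bool) → Bool) :
    ∑ x, sensitivity f x = 2 * ∑ x with f x = true, sensitivity f x := by
  let r : (ι → Bool) → ι → Prop := fun x i => f (flipAt x i) ≠ f x
  calc ∑ x, sensitivity f x
      = ∑ i, #{x | f (flipAt x i) ≠ f x} :=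
        sum_card_bipartiteAbove_eq_sum_card_bipartiteBelow r
    _ = 2 * ∑ i, #{x ∈ {x | f x = true} | f (flipAt x i) ≠ f x} := by
        simp only [card_flipAt_ne_eq_two_mul, mul_sum, filter_filter, and_comm]
    _ = 2 * ∑ x with f x = true, sensitivity f x :=
        congrArg (2 * ·) (sum_card_bipartiteAbove_eq_sum_card_bipartiteBelow r).symm

end Sensitivity

section ModStar

variable {m n : ℕ}

theorem zeros_le (x : Fin n → Bool) : zeros x ≤ n :=
  (card_filter_le _ _).trans_eq (card_fin n)

theorem zeros_flipAt_add_one_of_false {x : Fin n → Bool} {i : Fin n} (h : x i = false) :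
    zeros (flipAt x i) + 1 = zeros x := by
  have h_erase : univ.filter (flipAt x i · = false) = (univ.filter (x · = false)).erase i := by
    ext j
    rcases eq_or_ne j i with rfl | hj
    · simp [flipAt, h]
    · rw [mem_filter, mem_erase, mem_filter]
      simp [flipAt, hj]
  rw [zeros, zeros, h_erase, card_erase_add_one (by simpa using h)]

theorem zeros_flipAt_of_true {x : Fin n → Bool} {i : Fin n} (h : x i = true) :
    zeros (flipAt x i) = zeros x + 1 := by
  have := zeros_flipAt_add_one_of_false (x := flipAt x i) (i := i) (by simp [flipAt, h])
  rwa [flipAt_flipAt, eq_comm] at this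

theorem not_dvd_zeros_flipAt (hm : m ≠ 1) {x : Fin n → Bool} (hx : m ∣ zeros x) (i : Fin n) :
    ¬m ∣ zeros (flipAt x i) := by
  intro hflip
  apply hm
  rw [← Nat.dvd_one]
  cases hxi : x i
  · rw [← zeros_flipAt_add_one_of_false hxi] at hx
    exact (Nat.dvd_add_right hflip).mp hx
  · rw [zeros_flipAt_of_true hxi] at hflip
    exact (Nat.dvd_add_right hx).mp hflip

theorem sensitivity_modStar_of_dvd (hm : m ≠ 1) {x : Fin n → Bool} (hx : m ∣ zeros x) :
    sensitivity (modStar m) x = n := by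
  rw [sensitivity, filter_true_of_mem, card_univ, Fintype.card_fin]
  intro i _
  simp [modStar, hx, not_dvd_zeros_flipAt hm hx i]

theorem card_zeros_eq_choose (k : ℕ) : #{x : Fin n → Bool | zeros x = k} = n.choose k := by
  rw [show n.choose k = #(powersetCard k (univ : Finset (Fin n))) by simp]
  refine card_nbij' (fun x => univ.filter (x · = false)) (fun s j => decide (j ∉ s)) ?_ ?_ ?_ ?_
  · intro x hx
    simpa [mem_powersetCard, zeros] using mem_filter.mp (mem_coe.mp hx)
  · intro s hs
    rw [mem_coe, mem_filter]
    simpa [zeros] using hs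
  · intro x _
    ext j
    simp
  · intro s _
    ext j
    simp

theorem card_dvd_zeros_eq_sum_choose (hm : 0 < m) :
    #{x : Fin n → Bool | m ∣ zeros x} = ∑ s ∈ range (n / m + 1), n.choose (s * m) := by
  rw [card_eq_sum_card_fiberwise (f := (zeros · / m)) fun x _ =>
    mem_range_succ_iff.mpr (Nat.div_le_div_right (zeros_le x))]
  refine sum_congr rfl fun s _ => ?_
  rw [filter_filter, ← card_zeros_eq_choose]
  congr 1
  ext x
  simp only [mem_filter, mem_univ, true_and]
  exact ⟨fun h => (Nat.div_eq_iff_eq_mul_left hm h.1).mp h.2,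
    fun h => ⟨h ▸ Nat.dvd_mul_left m s, h ▸ Nat.mul_div_cancel s hm⟩⟩

end ModStar

/-- Equations (11)–(12) of the paper: the total sensitivity of `MOD*_m` on
`{0,1}^n` equals `2n · Σ_{s=0}^{⌊n/m⌋} C(n, s·m)`. -/
theorem total_sensitivity_modStar (m : ℕ) (hm : 2 ≤ m) (n : ℕ) :
    ∑ x : Fin n → Bool, sens m x
      = 2 * n * ∑ s ∈ Finset.range (n / m + 1), n.choose (s * m) := by
  calc ∑ x : Fin n → Bool, sens m x
      = 2 * ∑ x with modStar m x = true, sensitivity (modStar m) x :=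
        sum_sensitivity_eq_two_mul (modStar m)
    _ = 2 * ∑ x : Fin n → Bool with m ∣ zeros x, n := by
        simp only [modStar, decide_eq_true_eq]
        rw [sum_congr rfl fun x hx => sensitivity_modStar_of_dvd (by omega) (mem_filter.mp hx).2]
    _ = 2 * n * ∑ s ∈ range (n / m + 1), n.choose (s * m) := by
        rw [sum_const, card_dvd_zeros_eq_sum_choose (by omega), smul_eq_mul]
        ring
end

section
/- Fix an integer m ≥ 1. Then the real sequence (Σ_{s=0}^{⌊n/m⌋} C(n, s·m)) / 2^n converges to 1/m as n → ∞. -/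
open Finset Filter

lemma key_identity (m n : ℕ) (hm : 0 < m) {ω : ℂ} (hω : IsPrimitiveRoot ω m) :
    ∑ j ∈ range m, (1 + ω ^ j) ^ n
      = (m : ℂ) * ∑ s ∈ range (n / m + 1), (n.choose (s * m) : ℂ) := by
  have h1 : ∀ j, (1 + ω ^ j) ^ n
      = ∑ k ∈ range (n + 1), (n.choose k : ℂ) * (ω ^ k) ^ j := by
    intro j
    rw [add_comm, add_pow]
    refine Finset.sum_congr rfl fun k hk => ?_
    rw [one_pow, mul_one, ← pow_mul, mul_comm j k, pow_mul]
    ring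
  simp_rw [h1]
  rw [Finset.sum_comm]
  have h2 : ∀ k ∈ range (n + 1),
      ∑ j ∈ range m, (n.choose k : ℂ) * (ω ^ k) ^ j
        = if m ∣ k then (m : ℂ) * (n.choose k : ℂ) else 0 := by
    intro k _
    rw [← Finset.mul_sum]
    by_cases hd : m ∣ k
    · have : ω ^ k = 1 := by
        obtain ⟨c, rfl⟩ := hd
        rw [pow_mul, hω.pow_eq_one, one_pow]
      rw [if_pos hd]
      simp [this, mul_comm]
    · have hne : ω ^ k ≠ 1 := fun h => hd ((hω.pow_eq_one_iff_dvd k).mp h)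
      have : ∑ j ∈ range m, (ω ^ k) ^ j = 0 := by
        have := geom_sum_eq hne m
        rw [this, ← pow_mul, mul_comm k m, pow_mul, hω.pow_eq_one, one_pow, sub_self,
          zero_div]
      rw [this, mul_zero, if_neg hd]
  rw [Finset.sum_congr rfl h2, ← Finset.sum_filter, ← Finset.mul_sum]
  congr 1
  refine Finset.sum_nbij' (fun k => k / m) (fun s => s * m) ?_ ?_ ?_ ?_ ?_
  · intro k hk
    simp only [mem_filter, mem_range] at hk
    simp only [mem_range]
    exact Nat.lt_succ_of_le (Nat.div_le_div_right (by omega))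
  · intro s hs
    simp only [mem_range] at hs
    simp only [mem_filter, mem_range]
    constructor
    · have : s * m ≤ (n / m) * m := by
        exact Nat.mul_le_mul_right m (by omega)
      have := Nat.div_mul_le_self n m
      omega
    · exact dvd_mul_left m s
  · intro k hk
    simp only [mem_filter, mem_range] at hk
    exact Nat.div_mul_cancel hk.2
  · intro s hs
    exact Nat.mul_div_cancel s hm
  · intro k hk
    simp only [mem_filter, mem_range] at hk
    rw [Nat.div_mul_cancel hk.2]

lemma norm_one_add_lt {w : ℂ} (hw : ‖w‖ = 1) (hne : w ≠ 1) : ‖1 + w‖ < 2 := by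
  have hray : ¬ SameRay ℝ (1 : ℂ) w := by
    rw [sameRay_iff_of_norm_eq (by simp [hw])]
    exact fun h => hne h.symm
  have := norm_add_lt_of_not_sameRay hray
  simp only [norm_one, hw] at this
  linarith

/-- From the proof of Theorem 7 of the paper: the proportion of subsets of an
`n`-set whose size is a multiple of `m` tends to `1/m`. -/
theorem prop_multiple_tendsto (m : ℕ) (hm : 1 ≤ m) :
    Filter.Tendsto
      (fun n : ℕ =>
        (∑ s ∈ Finset.range (n / m + 1), (n.choose (s * m) : ℝ)) / 2 ^ n)
      Filter.atTop (nhds (1 / m)) := by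
  have hm0 : 0 < m := hm
  obtain ⟨ω, hω⟩ : ∃ ω : ℂ, IsPrimitiveRoot ω m :=
    ⟨_, Complex.isPrimitiveRoot_exp m hm0.ne'⟩
  have hωnorm : ‖ω‖ = 1 := hω.norm'_eq_one hm0.ne'
  -- complex-valued version of the sequence
  have hlim : Filter.Tendsto (fun n => ∑ j ∈ range m, ((1 + ω ^ j) / 2) ^ n) atTop
      (nhds (∑ j ∈ range m, if j = 0 then (1 : ℂ) else 0)) := by
    refine tendsto_finset_sum _ fun j hj => ?_
    by_cases hj0 : j = 0
    · subst hj0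
      have hb : ((1 + ω ^ 0) / 2 : ℂ) = 1 := by norm_num
      rw [if_pos rfl, hb]
      exact tendsto_const_nhds.congr fun n => (one_pow n).symm
    · rw [if_neg hj0]
      apply tendsto_pow_atTop_nhds_zero_of_norm_lt_one
      have hne : ω ^ j ≠ 1 := by
        intro h
        exact hj0 (Nat.eq_zero_of_dvd_of_lt ((hω.pow_eq_one_iff_dvd j).mp h)
          (mem_range.mp hj))
      have h2 : ‖1 + ω ^ j‖ < 2 := norm_one_add_lt (by rw [norm_pow, hωnorm, one_pow]) hne
      rw [norm_div, Complex.norm_ofNat]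
      linarith
  have hsum : (∑ j ∈ range m, if j = 0 then (1 : ℂ) else 0) = 1 := by
    rw [Finset.sum_ite_eq' (range m) 0 (fun _ => (1 : ℂ))]
    simp [hm0]
  rw [hsum] at hlim
  have hlim2 : Filter.Tendsto
      (fun n => (∑ j ∈ range m, ((1 + ω ^ j) / 2) ^ n) / (m : ℂ)) atTop
      (nhds (1 / m : ℂ)) := by
    simpa using hlim.div_const (m : ℂ)
  have hmC : (m : ℂ) ≠ 0 := Nat.cast_ne_zero.mpr hm0.ne'
  have heq : ∀ n : ℕ,
      (∑ j ∈ range m, ((1 + ω ^ j) / 2) ^ n) / (m : ℂ)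
        = (((∑ s ∈ Finset.range (n / m + 1), (n.choose (s * m) : ℝ)) / 2 ^ n : ℝ) : ℂ) := by
    intro n
    have hk := key_identity m n hm0 hω
    have h2 : (2 : ℂ) ^ n ≠ 0 := pow_ne_zero n two_ne_zero
    push_cast
    rw [div_eq_iff hmC]
    simp_rw [div_pow]
    rw [← Finset.sum_div, hk]
    field_simp
  rw [funext heq] at hlim2
  rw [show ((1 : ℂ) / m) = (((1 / m : ℝ)) : ℂ) by push_cast; ring] at hlim2
  exact Filter.tendsto_ofReal_iff.mp hlim2
end

section
/- Let t be a natural number with t ≥ 8 and define, for natural numbers n with 1 ≤ n ≤ ⌊t/2⌋, B(n) = Σ_{i=0}^{n} C(n,i)² · C(t−2n, 2−2i), with the convention that C(a,b) = 0 when b > a or b < 0. Then B(1) = C(t−2, 2) + 1, and for every n with 1 ≤ n ≤ ⌊t/2⌋ one has B(n) ≤ B(1) = C(t−2, 2) + 1. -/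
lemma choose_two_step (m : ℕ) : (m + 2).choose 2 = m.choose 2 + (2 * m + 1) := by
  simp [Nat.choose, Nat.choose_one_right]
  ring

lemma choose_two_shift (s k : ℕ) :
    (s + 2 * k).choose 2 + k = s.choose 2 + 2 * k * s + 2 * k ^ 2 := by
  induction k with
  | zero => ring_nf
  | succ k ih =>
      have : s + 2 * (k + 1) = (s + 2 * k) + 2 := by ring
      rw [this, choose_two_step]
      ring_nf
      ring_nf at ih
      omega

lemma Bval (t n : ℕ) (hn : 1 ≤ n) :
    (∑ i ∈ Finset.range (n + 1), n.choose i ^ 2 *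
        (if 2 * i ≤ 2 then (t - 2 * n).choose (2 - 2 * i) else 0))
      = (t - 2 * n).choose 2 + n ^ 2 := by
  rw [← Finset.sum_subset (Finset.range_subset_range.mpr (by omega : 2 ≤ n + 1))]
  · simp [Finset.sum_range_succ, sq]
  · intro i _ hi
    simp only [Finset.mem_range] at hi
    rw [if_neg (by omega), mul_zero]

/-- The claim from Section 3 of the paper: for `f = 2` and `t ≥ 8`, the value
`B_(2,n)` of equation (4) is maximized over `1 ≤ n ≤ ⌊t/2⌋` at `n = 1`, where
`B_(2,1) = C(t-2,2) + 1`. -/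
theorem max_balanced_two_fakes (t : ℕ) (ht : 8 ≤ t) (B : ℕ → ℕ)
    (hB : ∀ n, B n = ∑ i ∈ Finset.range (n + 1),
        n.choose i ^ 2 *
          (if 2 * i ≤ 2 then (t - 2 * n).choose (2 - 2 * i) else 0)) :
    B 1 = (t - 2).choose 2 + 1 ∧ ∀ n, 1 ≤ n → n ≤ t / 2 → B n ≤ B 1 := by
  have hB1 : B 1 = (t - 2).choose 2 + 1 := by
    rw [hB, Bval t 1 le_rfl]; simp
  refine ⟨hB1, fun n hn hnt => ?_⟩
  rw [hB, Bval t n hn, hB1]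
  set s := t - 2 * n with hs
  set k := n - 1 with hk
  have h2n : 2 * n ≤ t := by omega
  have hts : t - 2 = s + 2 * k := by omega
  have h6 : 6 ≤ s + 2 * k := by omega
  rw [hts]
  -- need: s.choose 2 + n^2 ≤ (s + 2k).choose 2 + 1
  have key := choose_two_shift s k
  have hkey : 3 * k ≤ 2 * k * s + k ^ 2 := by
    rcases Nat.lt_or_ge k 3 with h | h
    · nlinarith
    · nlinarith
  have hn2 : n ^ 2 = k ^ 2 + 2 * k + 1 := by
    have : n = k + 1 := by omega
    rw [this]; ring
  omega
end
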